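/- arXiv:2604.22158 — 6 statements merged into one kernel-verified Lean document; each statement's English description precedes it below -/
import Mathlib

section
/- Let 0.5 < x < y ≤ ȳ < 1 be real numbers. Then 1/Φ⁻¹(x)² − 1/Φ⁻¹(y)² ≤ (2·Φ⁻¹(ȳ) / (φ(Φ⁻¹(ȳ)) · Φ⁻¹(x)⁴)) · (y − x). -/
/-- Φ: the cumulative distribution function of the standard normal distribution. -/
noncomputable def stdGaussianCDF (x : ℝ) : ℝ :=
  (ProbabilityTheory.gaussianReal 0 1 (Set.Iic x)).toReal

/-- Φ⁻¹: the standard normal quantile function (inverse of the CDF). -/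
noncomputable def stdGaussianQuantile : ℝ → ℝ :=
  Function.invFun stdGaussianCDF

/-- φ: the standard normal probability density function. -/
noncomputable def stdGaussianPDF (x : ℝ) : ℝ :=
  ProbabilityTheory.gaussianPDFReal 0 1 x

/-! Write `a = Φ⁻¹(x)`, `b = Φ⁻¹(y)`, `c = Φ⁻¹(ȳ)`, so that `0 < a < b ≤ c`. Since `φ` decreases
on `[0, ∞)`, `y - x = ∫ₐᵇ φ ≥ (b - a) φ(c)`, and on the other hand
`1/a² - 1/b² = (b - a)(b + a)/(a²b²) ≤ 2c (b - a)/a⁴`. -/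

open MeasureTheory ProbabilityTheory Set Filter Topology Real

lemma stdGaussianPDF_eq (t : ℝ) : stdGaussianPDF t = (√(2 * π))⁻¹ * exp (-t ^ 2 / 2) := by
  simp [stdGaussianPDF, gaussianPDFReal]

lemma stdGaussianPDF_pos (t : ℝ) : 0 < stdGaussianPDF t :=
  gaussianPDFReal_pos 0 1 t one_ne_zero

lemma stdGaussianPDF_neg (t : ℝ) : stdGaussianPDF (-t) = stdGaussianPDF t := by
  simp [stdGaussianPDF_eq]

lemma antitoneOn_stdGaussianPDF : AntitoneOn stdGaussianPDF (Ici 0) := by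
  intro s hs t _ hst
  rw [stdGaussianPDF_eq, stdGaussianPDF_eq]
  gcongr

lemma integrable_stdGaussianPDF : Integrable stdGaussianPDF := integrable_gaussianPDFReal 0 1

lemma stdGaussianCDF_eq_integral (x : ℝ) : stdGaussianCDF x = ∫ t in Iic x, stdGaussianPDF t := by
  rw [stdGaussianCDF, gaussianReal_apply_eq_integral 0 one_ne_zero,
    ENNReal.toReal_ofReal (setIntegral_nonneg measurableSet_Iic
      fun t _ => gaussianPDFReal_nonneg 0 1 t)]
  rfl

lemma stdGaussianCDF_sub (a b : ℝ) :
    stdGaussianCDF b - stdGaussianCDF a = ∫ t in a..b, stdGaussianPDF t := by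
  rw [stdGaussianCDF_eq_integral, stdGaussianCDF_eq_integral,
    intervalIntegral.integral_Iic_sub_Iic integrable_stdGaussianPDF.integrableOn
      integrable_stdGaussianPDF.integrableOn]

lemma stdGaussianCDF_eq_cdf : stdGaussianCDF = cdf (gaussianReal 0 1) := by
  ext x
  rw [cdf_eq_real, measureReal_def, stdGaussianCDF]

lemma strictMono_stdGaussianCDF : StrictMono stdGaussianCDF := by
  intro a b hab
  have : 0 < ∫ t in a..b, stdGaussianPDF t :=
    intervalIntegral.intervalIntegral_pos_of_pos integrable_stdGaussianPDF.intervalIntegrable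
      stdGaussianPDF_pos hab
  linarith [stdGaussianCDF_sub a b]

lemma continuous_stdGaussianCDF : Continuous stdGaussianCDF := by
  have h : stdGaussianCDF = fun b ↦ stdGaussianCDF 0 + ∫ t in (0 : ℝ)..b, stdGaussianPDF t := by
    ext b
    rw [← stdGaussianCDF_sub]
    ring
  rw [h]
  exact continuous_const.add (integrable_stdGaussianPDF.continuous_primitive 0)

lemma stdGaussianCDF_zero : stdGaussianCDF 0 = 1 / 2 := by
  have h_total : (∫ t in Iic (0 : ℝ), stdGaussianPDF t) + ∫ t in Ioi (0 : ℝ), stdGaussianPDF t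
      = 1 := by
    rw [intervalIntegral.integral_Iic_add_Ioi integrable_stdGaussianPDF.integrableOn
      integrable_stdGaussianPDF.integrableOn]
    exact integral_gaussianPDFReal_eq_one 0 one_ne_zero
  have h_symm : (∫ t in Iic (0 : ℝ), stdGaussianPDF t) = ∫ t in Ioi (0 : ℝ), stdGaussianPDF t := by
    rw [← neg_zero, ← integral_comp_neg_Iic]
    simp only [stdGaussianPDF_neg, neg_zero]
  rw [stdGaussianCDF_eq_integral]
  linarith

lemma stdGaussianCDF_stdGaussianQuantile {p : ℝ} (hp : p ∈ Ioo 0 1) :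
    stdGaussianCDF (stdGaussianQuantile p) = p := by
  have h_bot : Tendsto stdGaussianCDF atBot (𝓝 0) :=
    stdGaussianCDF_eq_cdf ▸ tendsto_cdf_atBot (gaussianReal 0 1)
  have h_top : Tendsto stdGaussianCDF atTop (𝓝 1) :=
    stdGaussianCDF_eq_cdf ▸ tendsto_cdf_atTop (gaussianReal 0 1)
  obtain ⟨A, hA⟩ := (h_bot.eventually (eventually_lt_nhds hp.1)).exists
  obtain ⟨B, hB⟩ := (h_top.eventually (eventually_gt_nhds hp.2)).exists
  have hAB : A ≤ B := strictMono_stdGaussianCDF.le_iff_le.mp (by linarith)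
  obtain ⟨q, -, hq⟩ := intermediate_value_Icc hAB continuous_stdGaussianCDF.continuousOn
    ⟨hA.le, hB.le⟩
  exact Function.invFun_eq ⟨q, hq⟩

lemma stdGaussianQuantile_le_stdGaussianQuantile {p q : ℝ} (hp : p ∈ Ioo 0 1)
    (hq : q ∈ Ioo 0 1) (hpq : p ≤ q) : stdGaussianQuantile p ≤ stdGaussianQuantile q := by
  rwa [← strictMono_stdGaussianCDF.le_iff_le, stdGaussianCDF_stdGaussianQuantile hp,
    stdGaussianCDF_stdGaussianQuantile hq]

lemma stdGaussianQuantile_pos {p : ℝ} (h_half : 1 / 2 < p) (h_one : p < 1) :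
    0 < stdGaussianQuantile p := by
  rwa [← strictMono_stdGaussianCDF.lt_iff_lt, stdGaussianCDF_zero,
    stdGaussianCDF_stdGaussianQuantile ⟨by linarith, h_one⟩]

lemma sub_mul_stdGaussianPDF_le {a b c : ℝ} (ha : 0 ≤ a) (hab : a ≤ b) (hbc : b ≤ c) :
    (b - a) * stdGaussianPDF c ≤ stdGaussianCDF b - stdGaussianCDF a := by
  rw [stdGaussianCDF_sub, ← smul_eq_mul, ← intervalIntegral.integral_const]
  refine intervalIntegral.integral_mono_on hab intervalIntegrable_const
    integrable_stdGaussianPDF.intervalIntegrable fun t ht ↦ ?_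
  have ht0 : 0 ≤ t := ha.trans ht.1
  exact antitoneOn_stdGaussianPDF ht0 (ht0.trans (ht.2.trans hbc)) (ht.2.trans hbc)

lemma one_div_sq_sub_one_div_sq_le {a b c : ℝ} (ha : 0 < a) (hab : a ≤ b) (hbc : b ≤ c) :
    1 / a ^ 2 - 1 / b ^ 2 ≤ 2 * c * (b - a) / a ^ 4 := by
  have hb : 0 < b := ha.trans_le hab
  have h_factor : 1 / a ^ 2 - 1 / b ^ 2 = (b - a) * (b + a) / (a ^ 2 * b ^ 2) := by
    field_simp
    ring
  rw [h_factor, div_le_div_iff₀ (by positivity) (by positivity)]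
  have hba : 0 ≤ b - a := by linarith
  have hc : 0 ≤ 2 * c * (b - a) := mul_nonneg (by linarith) hba
  calc (b - a) * (b + a) * a ^ 4 ≤ (b - a) * (2 * c) * a ^ 4 := by gcongr; linarith
    _ = 2 * c * (b - a) * (a ^ 2 * a ^ 2) := by ring
    _ ≤ 2 * c * (b - a) * (a ^ 2 * b ^ 2) := by gcongr

/-- for 0.5 < x < y ≤ ȳ < 1,
`1/Φ⁻¹(x)² − 1/Φ⁻¹(y)² ≤ (2·Φ⁻¹(ȳ) / (φ(Φ⁻¹(ȳ)) · Φ⁻¹(x)⁴)) · (y − x)`. -/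
theorem stmt_0 (x y ybar : ℝ) (hx : (0.5 : ℝ) < x) (hxy : x < y) (hyybar : y ≤ ybar)
    (hybar : ybar < 1) :
    1 / stdGaussianQuantile x ^ 2 - 1 / stdGaussianQuantile y ^ 2 ≤
      2 * stdGaussianQuantile ybar /
        (stdGaussianPDF (stdGaussianQuantile ybar) * stdGaussianQuantile x ^ 4) * (y - x) := by
  norm_num at hx
  have hx' : x ∈ Ioo 0 1 := ⟨by linarith, by linarith⟩
  have hy' : y ∈ Ioo 0 1 := ⟨by linarith, by linarith⟩
  have ha := stdGaussianQuantile_pos hx (by linarith)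
  have hab := stdGaussianQuantile_le_stdGaussianQuantile hx' hy' hxy.le
  have hbc := stdGaussianQuantile_le_stdGaussianQuantile hy' ⟨by linarith, hybar⟩ hyybar
  have h_mass := sub_mul_stdGaussianPDF_le ha.le hab hbc
  rw [stdGaussianCDF_stdGaussianQuantile hx', stdGaussianCDF_stdGaussianQuantile hy'] at h_mass
  have hφ := stdGaussianPDF_pos (stdGaussianQuantile ybar)
  have hc := ha.trans_le (hab.trans hbc)
  calc _ ≤ 2 * stdGaussianQuantile ybar * (stdGaussianQuantile y - stdGaussianQuantile x) /
        stdGaussianQuantile x ^ 4 := one_div_sq_sub_one_div_sq_le ha hab hbc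
    _ = 2 * stdGaussianQuantile ybar /
        (stdGaussianPDF (stdGaussianQuantile ybar) * stdGaussianQuantile x ^ 4) *
        ((stdGaussianQuantile y - stdGaussianQuantile x) *
          stdGaussianPDF (stdGaussianQuantile ybar)) := by
      field_simp
    _ ≤ _ := by gcongr
end

section
/- Let z_1,…,z_T ∈ ℝ^d, λ > 0, and let V_t = λ·I + ∑_{s=1}^{t} z_s z_sᵀ. For any t, t' ∈ {1,…,T} with t ≥ t', it holds that log(det(V_t)/det(V_{t'})) ≤ (1/λ) · ∑_{s=t'+1}^{t} ‖z_s‖². -/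
/-! By the matrix determinant lemma, the rank-one update `V ↦ V + z zᵀ` multiplies `det V` by
`1 + zᵀ V⁻¹ z`, and `log (1 + q) ≤ q ≤ ‖z‖² / λ` because `V ≥ λ I`. Summing these one-step
bounds telescopes to the claim. -/

/-- The Euclidean norm of a vector given as a finitely-indexed family of reals. -/
noncomputable def euclNorm {ι : Type*} [Fintype ι] (v : ι → ℝ) : ℝ :=
  Real.sqrt (∑ i, v i ^ 2)

open Matrix Finset

theorem euclNorm_sq {ι : Type*} [Fintype ι] (v : ι → ℝ) : euclNorm v ^ 2 = v ⬝ᵥ v := by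
  rw [euclNorm, Real.sq_sqrt (sum_nonneg fun i _ => sq_nonneg _)]
  simp only [dotProduct, sq]

theorem sub_le_sum_Icc_of_sub_succ_le {M : Type*} [AddCommGroup M] [PartialOrder M]
    [IsOrderedAddMonoid M] {f g : ℕ → M} (h : ∀ s, f (s + 1) - f s ≤ g (s + 1)) {a b : ℕ}
    (hab : a ≤ b) : f b - f a ≤ ∑ s ∈ Icc (a + 1) b, g s := by
  induction b, hab using Nat.le_induction with
  | base => simp
  | succ b hab ih =>
    rw [sum_Icc_succ_top (by omega), ← sub_add_sub_cancel (f (b + 1)) (f b), add_comm]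
    exact add_le_add ih (h b)

namespace Matrix

variable {n : Type*} [DecidableEq n]

theorem PosSemidef.posDef_of_sub_smul_one {A : Matrix n n ℝ} {lam : ℝ}
    (hA : (A - lam • 1).PosSemidef) (hlam : 0 < lam) : A.PosDef := by
  simpa using PosDef.posSemidef_add hA (PosDef.one.smul hlam)

variable [Fintype n]

theorem det_add_vecMulVec {α : Type*} [CommRing α] {A : Matrix n n α} (hA : IsUnit A.det)
    (u v : n → α) : (A + vecMulVec u v).det = A.det * (1 + v ⬝ᵥ A⁻¹ *ᵥ u) := by
  rw [vecMulVec_eq Unit, det_add_replicateCol_mul_replicateRow hA, Matrix.mul_assoc,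
    ← replicateCol_mulVec, det_one_add_mul_comm, det_one_add_replicateCol_mul_replicateRow]

variable {A : Matrix n n ℝ} {lam : ℝ}

theorem PosSemidef.dotProduct_inv_mulVec_le (hA : (A - lam • 1).PosSemidef) (hlam : 0 < lam)
    (v : n → ℝ) : v ⬝ᵥ A⁻¹ *ᵥ v ≤ (v ⬝ᵥ v) / lam := by
  set w := A⁻¹ *ᵥ v
  have hAw : A *ᵥ w = v := by
    rw [mulVec_mulVec, mul_nonsing_inv A (hA.posDef_of_sub_smul_one hlam).det_pos.ne'.isUnit,
      one_mulVec]
  have hlow : lam * (w ⬝ᵥ w) ≤ v ⬝ᵥ w := by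
    have := hA.dotProduct_mulVec_nonneg w
    rw [star_trivial, sub_mulVec, dotProduct_sub, hAw, smul_mulVec, one_mulVec,
      dotProduct_smul, smul_eq_mul, dotProduct_comm] at this
    linarith
  have hcs : (v ⬝ᵥ w) ^ 2 ≤ (v ⬝ᵥ v) * (w ⬝ᵥ w) := by
    simpa only [dotProduct, sq] using sum_mul_sq_le_sq_mul_sq univ v w
  have hvv : 0 ≤ v ⬝ᵥ v := by simpa using dotProduct_self_star_nonneg v
  -- `λ (v ⬝ᵥ w)² ≤ (v ⬝ᵥ v) λ (w ⬝ᵥ w) ≤ (v ⬝ᵥ v) (v ⬝ᵥ w)`; cancel one factor `v ⬝ᵥ w`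
  rw [le_div_iff₀ hlam, mul_comm]
  rcases le_or_gt (v ⬝ᵥ w) 0 with hq | hq
  · nlinarith
  · refine le_of_mul_le_mul_left ?_ hq
    nlinarith [mul_le_mul_of_nonneg_left hlow hvv]

theorem PosSemidef.log_det_add_vecMulVec_self_sub_le (hA : (A - lam • 1).PosSemidef)
    (hlam : 0 < lam) (v : n → ℝ) :
    Real.log (A + vecMulVec v v).det - Real.log A.det ≤ (v ⬝ᵥ v) / lam := by
  have hA' := hA.posDef_of_sub_smul_one hlam
  have hq : 0 ≤ v ⬝ᵥ A⁻¹ *ᵥ v := by simpa using hA'.inv.posSemidef.dotProduct_mulVec_nonneg v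
  rw [det_add_vecMulVec hA'.det_pos.ne'.isUnit,
    Real.log_mul hA'.det_pos.ne' (by positivity), add_sub_cancel_left]
  linarith [Real.log_le_sub_one_of_pos (by positivity : 0 < 1 + v ⬝ᵥ A⁻¹ *ᵥ v),
    hA.dotProduct_inv_mulVec_le hlam v]

end Matrix

theorem stmt_2_general {d : ℕ} (z : ℕ → Fin d → ℝ) (lam : ℝ) (hlam : 0 < lam)
    (V : ℕ → Matrix (Fin d) (Fin d) ℝ)
    (hV : ∀ t, V t = lam • (1 : Matrix (Fin d) (Fin d) ℝ) +
      ∑ s ∈ Finset.Icc 1 t, Matrix.vecMulVec (z s) (z s))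
    (t t' : ℕ) (ht't : t' ≤ t) :
    Real.log ((V t).det / (V t').det) ≤
      (1 / lam) * ∑ s ∈ Finset.Icc (t' + 1) t, euclNorm (z s) ^ 2 := by
  have hgram : ∀ s, (V s - lam • 1).PosSemidef := fun s => by
    rw [hV, add_sub_cancel_left]
    exact posSemidef_sum _ fun i _ => by simpa using posSemidef_vecMulVec_self_star (z i)
  have hstep : ∀ s, V (s + 1) = V s + vecMulVec (z (s + 1)) (z (s + 1)) := fun s => by
    rw [hV, hV, sum_Icc_succ_top (by omega), add_assoc]
  have hdet : ∀ s, (V s).det ≠ 0 := fun s =>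
    ((hgram s).posDef_of_sub_smul_one hlam).det_pos.ne'
  rw [Real.log_div (hdet t) (hdet t'), mul_sum]
  refine sub_le_sum_Icc_of_sub_succ_le (f := fun s => Real.log (V s).det) (fun s => ?_) ht't
  rw [hstep, euclNorm_sq, one_div_mul_eq_div]
  exact (hgram s).log_det_add_vecMulVec_self_sub_le hlam _

/-- with `V t = λ·I + ∑_{s=1}^t z_s z_sᵀ`, for `1 ≤ t' ≤ t ≤ T`,
`log(det V_t / det V_{t'}) ≤ (1/λ) ∑_{s=t'+1}^t ‖z_s‖²`. -/
theorem stmt_2 {d : ℕ} (T : ℕ) (z : ℕ → Fin d → ℝ) (lam : ℝ) (hlam : 0 < lam)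
    (V : ℕ → Matrix (Fin d) (Fin d) ℝ)
    (hV : ∀ t, V t = lam • (1 : Matrix (Fin d) (Fin d) ℝ) +
      ∑ s ∈ Finset.Icc 1 t, Matrix.vecMulVec (z s) (z s))
    (t t' : ℕ) (ht'1 : 1 ≤ t') (ht't : t' ≤ t) (htT : t ≤ T) :
    Real.log ((V t).det / (V t').det) ≤
      (1 / lam) * ∑ s ∈ Finset.Icc (t' + 1) t, euclNorm (z s) ^ 2 :=
  stmt_2_general z lam hlam V hV t t' ht't
end

section
/- Let z_1,…,z_T ∈ ℝ^d, λ > 0, R_z > 0, and let V_t = λ·I + ∑_{s=1}^{t} z_s z_sᵀ. Suppose t' > t, ‖z_s‖ ≤ R_z for all s ∈ {t+1,…,t'}, and det(V_{t'}) ≥ 2·det(V_t). Then t' − t ≥ (log 2 / R_z²) · λ. -/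
open Matrix Finset

theorem Matrix.det_add_vecMulVec_s3 {n α : Type*} [Fintype n] [DecidableEq n] [CommRing α]
    {A : Matrix n n α} (hA : IsUnit A.det) (u v : n → α) :
    (A + vecMulVec u v).det = A.det * (1 + v ⬝ᵥ (A⁻¹ *ᵥ u)) := by
  have hfactor : A + vecMulVec u v =
      A * (1 + replicateCol Unit (A⁻¹ *ᵥ u) * replicateRow Unit v) := by
    rw [mul_add, mul_one, ← Matrix.mul_assoc, ← replicateCol_mulVec, mulVec_mulVec,
      mul_nonsing_inv A hA, one_mulVec, vecMulVec_eq Unit]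
  rw [hfactor, det_mul, det_one_add_replicateCol_mul_replicateRow]

theorem dotProduct_sq_le {n : Type*} [Fintype n] (u v : n → ℝ) :
    (u ⬝ᵥ v) ^ 2 ≤ (u ⬝ᵥ u) * (v ⬝ᵥ v) := by
  simpa only [dotProduct, sq] using Finset.sum_mul_sq_le_sq_mul_sq univ u v

theorem Matrix.posSemidef_sum_vecMulVec_self {ι n : Type*} [Fintype n] (s : Finset ι)
    (z : ι → n → ℝ) : (∑ i ∈ s, vecMulVec (z i) (z i)).PosSemidef :=
  posSemidef_sum s fun i _ => by simpa using posSemidef_vecMulVec_self_star (z i)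

section

variable {n : Type*} [Fintype n] [DecidableEq n]

theorem dotProduct_inv_mulVec_le {lam : ℝ} (hlam : 0 < lam) {N : Matrix n n ℝ}
    (hN : N.PosSemidef) (z : n → ℝ) :
    z ⬝ᵥ ((lam • 1 + N)⁻¹ *ᵥ z) ≤ z ⬝ᵥ z / lam := by
  set A := lam • (1 : Matrix n n ℝ) + N
  have hA : A.PosDef := (PosDef.one.smul hlam).add_posSemidef hN
  set w := A⁻¹ *ᵥ z
  have hAw : A *ᵥ w = z := by
    rw [mulVec_mulVec, mul_nonsing_inv A (isUnit_iff_ne_zero.mpr hA.det_pos.ne'), one_mulVec]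
  have hzw : 0 ≤ z ⬝ᵥ w := by simpa using hA.inv.posSemidef.dotProduct_mulVec_nonneg z
  have hww : lam * (w ⬝ᵥ w) ≤ z ⬝ᵥ w := by
    have hNw : 0 ≤ w ⬝ᵥ (N *ᵥ w) := by simpa using hN.dotProduct_mulVec_nonneg w
    have hsplit : w ⬝ᵥ (A *ᵥ w) = lam * (w ⬝ᵥ w) + w ⬝ᵥ (N *ᵥ w) := by
      simp [A, add_mulVec, smul_mulVec]
    rw [hAw, dotProduct_comm] at hsplit
    linarith
  have hS : 0 ≤ z ⬝ᵥ z := by simpa using dotProduct_star_self_nonneg z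
  have hkey : (z ⬝ᵥ w) ^ 2 * lam ≤ (z ⬝ᵥ z) * (z ⬝ᵥ w) :=
    calc (z ⬝ᵥ w) ^ 2 * lam ≤ (z ⬝ᵥ z) * (w ⬝ᵥ w) * lam := by gcongr; exact dotProduct_sq_le z w
      _ = (z ⬝ᵥ z) * (lam * (w ⬝ᵥ w)) := by ring
      _ ≤ (z ⬝ᵥ z) * (z ⬝ᵥ w) := by gcongr
  rw [le_div_iff₀ hlam]
  nlinarith

theorem det_add_vecMulVec_self_le {lam : ℝ} (hlam : 0 < lam) {N : Matrix n n ℝ}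
    (hN : N.PosSemidef) (z : n → ℝ) :
    (lam • 1 + N + vecMulVec z z).det ≤ (1 + z ⬝ᵥ z / lam) * (lam • 1 + N).det := by
  have hA : (lam • 1 + N).PosDef := (PosDef.one.smul hlam).add_posSemidef hN
  rw [det_add_vecMulVec_s3 (isUnit_iff_ne_zero.mpr hA.det_pos.ne'), mul_comm]
  gcongr
  · exact hA.det_pos.le
  · exact dotProduct_inv_mulVec_le hlam hN z

end

section

variable {n : Type*} [DecidableEq n]

noncomputable def regularizedGram (lam : ℝ) (z : ℕ → n → ℝ) (t : ℕ) : Matrix n n ℝ :=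
  lam • 1 + ∑ s ∈ Icc 1 t, vecMulVec (z s) (z s)

namespace regularizedGram

theorem succ (lam : ℝ) (z : ℕ → n → ℝ) (t : ℕ) :
    regularizedGram lam z (t + 1) =
      regularizedGram lam z t + vecMulVec (z (t + 1)) (z (t + 1)) := by
  rw [regularizedGram, regularizedGram, sum_Icc_succ_top (by omega), add_assoc]

variable [Fintype n] {lam : ℝ} {z : ℕ → n → ℝ}

theorem det_pos (hlam : 0 < lam) (t : ℕ) : 0 < (regularizedGram lam z t).det :=
  ((PosDef.one.smul hlam).add_posSemidef (posSemidef_sum_vecMulVec_self _ z)).det_pos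

theorem det_succ_le (hlam : 0 < lam) (t : ℕ) :
    (regularizedGram lam z (t + 1)).det ≤
      (1 + z (t + 1) ⬝ᵥ z (t + 1) / lam) * (regularizedGram lam z t).det := by
  rw [succ]
  exact det_add_vecMulVec_self_le hlam (posSemidef_sum_vecMulVec_self _ z) _

theorem det_add_le (hlam : 0 < lam) {R : ℝ} (hR : 0 ≤ R) {t m : ℕ}
    (hz : ∀ s ∈ Icc (t + 1) (t + m), z s ⬝ᵥ z s ≤ R) :
    (regularizedGram lam z (t + m)).det ≤ (1 + R / lam) ^ m * (regularizedGram lam z t).det := by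
  refine le_geom (u := fun k => (regularizedGram lam z (t + k)).det) (by positivity) m
    fun k hk => (det_succ_le hlam (t + k)).trans ?_
  gcongr
  · exact (det_pos hlam _).le
  · exact hz _ (mem_Icc.mpr ⟨by omega, by omega⟩)

end regularizedGram

end

theorem Real.log_le_mul_of_le_one_add_pow {x c : ℝ} (hx : 0 < x) (hc : 0 ≤ c) {m : ℕ}
    (h : x ≤ (1 + c) ^ m) : Real.log x ≤ m * c :=
  calc Real.log x ≤ Real.log ((1 + c) ^ m) := Real.log_le_log hx h
    _ = m * Real.log (1 + c) := Real.log_pow _ _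
    _ ≤ m * c := by
      gcongr
      linarith [Real.log_le_sub_one_of_pos (by linarith : 0 < 1 + c)]

theorem dotProduct_self_le_sq_of_euclNorm_le {ι : Type*} [Fintype ι] {v : ι → ℝ} {R : ℝ}
    (h : euclNorm v ≤ R) : v ⬝ᵥ v ≤ R ^ 2 := by
  have h0 : 0 ≤ euclNorm v := Real.sqrt_nonneg _
  calc v ⬝ᵥ v = euclNorm v ^ 2 := by
        rw [euclNorm, Real.sq_sqrt (by positivity)]; simp [dotProduct, sq]
    _ ≤ R ^ 2 := by gcongr

theorem stmt_3_general {d : ℕ} (z : ℕ → Fin d → ℝ) (lam Rz : ℝ) (hlam : 0 < lam)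
    (V : ℕ → Matrix (Fin d) (Fin d) ℝ)
    (hV : ∀ t, V t = lam • (1 : Matrix (Fin d) (Fin d) ℝ) +
      ∑ s ∈ Finset.Icc 1 t, Matrix.vecMulVec (z s) (z s))
    (t t' : ℕ) (ht : t < t')
    (hz : ∀ s ∈ Finset.Icc (t + 1) t', euclNorm (z s) ≤ Rz)
    (hdet : 2 * (V t).det ≤ (V t').det) :
    Real.log 2 / Rz ^ 2 * lam ≤ (t' : ℝ) - (t : ℝ) := by
  obtain rfl : V = regularizedGram lam z := funext hV
  obtain ⟨m, rfl⟩ := Nat.exists_eq_add_of_le ht.le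
  have hgrowth := regularizedGram.det_add_le hlam (sq_nonneg Rz)
    fun s hs => dotProduct_self_le_sq_of_euclNorm_le (hz s hs)
  have htwo : 2 ≤ (1 + Rz ^ 2 / lam) ^ m :=
    le_of_mul_le_mul_right (hdet.trans hgrowth) (regularizedGram.det_pos hlam t)
  have hlog := Real.log_le_mul_of_le_one_add_pow two_pos (by positivity) htwo
  rw [mul_div_assoc', le_div_iff₀ hlam] at hlog
  push_cast
  rw [add_sub_cancel_left, div_mul_eq_mul_div]
  rcases (sq_nonneg Rz).eq_or_lt with hR | hR
  · -- `x / 0 = 0` makes the left side vanish when `Rz = 0`.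
    simp [← hR]
  · rwa [div_le_iff₀ hR]

/-- with `V t = λ·I + ∑_{s=1}^t z_s z_sᵀ`, if `t' > t`, `‖z_s‖ ≤ R_z` for all
`s ∈ {t+1,…,t'}`, and `det(V_{t'}) ≥ 2·det(V_t)`, then `t' − t ≥ (log 2 / R_z²)·λ`. -/
theorem stmt_3 {d : ℕ} (T : ℕ) (z : ℕ → Fin d → ℝ) (lam Rz : ℝ) (hlam : 0 < lam) (hRz : 0 < Rz)
    (V : ℕ → Matrix (Fin d) (Fin d) ℝ)
    (hV : ∀ t, V t = lam • (1 : Matrix (Fin d) (Fin d) ℝ) +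
      ∑ s ∈ Finset.Icc 1 t, Matrix.vecMulVec (z s) (z s))
    (t t' : ℕ) (ht : t < t') (h1t : 1 ≤ t) (ht'T : t' ≤ T)
    (hz : ∀ s ∈ Finset.Icc (t + 1) t', euclNorm (z s) ≤ Rz)
    (hdet : 2 * (V t).det ≤ (V t').det) :
    Real.log 2 / Rz ^ 2 * lam ≤ (t' : ℝ) - (t : ℝ) :=
  stmt_3_general z lam Rz hlam V hV t t' ht hz hdet
end

section
/- Let z_1,…,z_T ∈ ℝ^d with ‖z_t‖ ≤ R_z for all t ∈ {1,…,T}, let λ > 0, and let V_t = λ·I + ∑_{s=1}^{t} z_s z_sᵀ. If there exist indices 1 ≤ t_1 < t_2 < … < t_N ≤ T such that det(V_{t_{k+1}}) ≥ 2·det(V_{t_k}) for all k ∈ {1,…,N−1}, then N ≤ 1 + 2·d·log(1 + R_z²·T/(d·λ)). -/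
open Matrix Finset

theorem Real.prod_le_sum_div_card_pow {ι : Type*} (s : Finset ι) {f : ι → ℝ}
    (hf : ∀ i ∈ s, 0 ≤ f i) :
    ∏ i ∈ s, f i ≤ ((∑ i ∈ s, f i) / #s) ^ #s := by
  rcases s.eq_empty_or_nonempty with rfl | hs
  · simp
  have hcard : (0 : ℝ) < #s := by exact_mod_cast hs.card_pos
  have hprod : 0 ≤ ∏ i ∈ s, f i := prod_nonneg hf
  have amgm := Real.geom_mean_le_arith_mean s (fun _ ↦ 1) f (fun _ _ ↦ zero_le_one)
    (by simpa using hcard) hf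
  simp only [Real.rpow_one, sum_const, nsmul_eq_mul, mul_one, one_mul] at amgm
  calc ∏ i ∈ s, f i = ((∏ i ∈ s, f i) ^ ((#s : ℝ)⁻¹)) ^ #s := by
        rw [← Real.rpow_natCast, ← Real.rpow_mul hprod, inv_mul_cancel₀ hcard.ne',
          Real.rpow_one]
    _ ≤ ((∑ i ∈ s, f i) / #s) ^ #s := pow_le_pow_left₀ (by positivity) amgm _

theorem two_pow_mul_le_of_two_mul_le {f : ℕ → ℝ} {N : ℕ}
    (h : ∀ k, 1 ≤ k → k + 1 ≤ N → 2 * f k ≤ f (k + 1)) (hN : 1 ≤ N) :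
    2 ^ (N - 1) * f 1 ≤ f N := by
  induction N, hN using Nat.le_induction with
  | base => simp
  | succ k hk ih =>
    calc 2 ^ (k + 1 - 1) * f 1 = 2 * (2 ^ (k - 1) * f 1) := by
          rw [show k + 1 - 1 = k - 1 + 1 by omega]; ring
      _ ≤ 2 * f k := by gcongr; exact ih fun j hj _ ↦ h j hj (by omega)
      _ ≤ f (k + 1) := h k hk le_rfl

theorem natCast_le_one_add_two_mul_log {N d : ℕ} {x : ℝ}
    (h : (2 : ℝ) ^ (N - 1) ≤ (1 + x) ^ d) :
    (N : ℝ) ≤ 1 + 2 * d * Real.log (1 + x) := by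
  have hlog := Real.log_le_log (by positivity) h
  rw [Real.log_pow, Real.log_pow] at hlog
  calc (N : ℝ) ≤ 1 + ((N - 1 : ℕ) : ℝ) := by
        exact_mod_cast (by omega : N ≤ 1 + (N - 1))
    _ ≤ 1 + 2 * (((N - 1 : ℕ) : ℝ) * Real.log 2) := by
        nlinarith [Real.log_two_gt_d9, (Nat.cast_nonneg (N - 1) : (0 : ℝ) ≤ _)]
    _ ≤ 1 + 2 * d * Real.log (1 + x) := by linarith

namespace Matrix

variable {n : Type*} [Fintype n]

theorem posSemidef_sum_vecMulVec_self_s6 {ι : Type*} (s : Finset ι) (z : ι → n → ℝ) :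
    (∑ i ∈ s, vecMulVec (z i) (z i)).PosSemidef :=
  posSemidef_sum s fun i _ ↦ by simpa using posSemidef_vecMulVec_self_star (z i)

variable [DecidableEq n]

open MatrixOrder in
theorem IsHermitian.le_eigenvalues_of_posSemidef_sub_smul {A : Matrix n n ℝ}
    (hA : A.IsHermitian) {c : ℝ} (h : (A - c • 1).PosSemidef) (i : n) :
    c ≤ hA.eigenvalues i := by
  have hc : algebraMap ℝ (Matrix n n ℝ) c ≤ A := by
    rwa [le_iff, Algebra.algebraMap_eq_smul_one]
  rw [algebraMap_le_iff_le_spectrum (a := A) hA.isSelfAdjoint] at hc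
  exact hc _ (hA.eigenvalues_mem_spectrum_real i)

theorem pow_card_le_det_of_posSemidef_sub_smul {A : Matrix n n ℝ} (hA : A.IsHermitian) {c : ℝ}
    (hc : 0 ≤ c) (h : (A - c • 1).PosSemidef) : c ^ Fintype.card n ≤ A.det := by
  rw [hA.det_eq_prod_eigenvalues, ← card_univ, ← prod_const]
  exact prod_le_prod (fun _ _ ↦ hc) fun i _ ↦ by
    simpa using hA.le_eigenvalues_of_posSemidef_sub_smul h i

theorem PosSemidef.det_le_trace_div_card_pow {A : Matrix n n ℝ} (hA : A.PosSemidef) :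
    A.det ≤ (A.trace / Fintype.card n) ^ Fintype.card n := by
  rw [hA.isHermitian.det_eq_prod_eigenvalues, hA.isHermitian.trace_eq_sum_eigenvalues,
    ← card_univ]
  simpa using Real.prod_le_sum_div_card_pow univ fun i _ ↦ hA.eigenvalues_nonneg i

theorem trace_smul_one_add_sum_vecMulVec_self {ι : Type*} (c : ℝ) (s : Finset ι)
    (z : ι → n → ℝ) :
    (c • 1 + ∑ i ∈ s, vecMulVec (z i) (z i)).trace =
      c * Fintype.card n + ∑ i ∈ s, z i ⬝ᵥ z i := by
  simp [trace_sum, trace_vecMulVec]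

section RegularizedGram

variable {ι : Type*} {c : ℝ} (s : Finset ι) (z : ι → n → ℝ)

theorem pow_card_le_det_smul_one_add_sum_vecMulVec_self (hc : 0 ≤ c) :
    c ^ Fintype.card n ≤ (c • 1 + ∑ i ∈ s, vecMulVec (z i) (z i)).det := by
  have hG := posSemidef_sum_vecMulVec_self_s6 s z
  have hV := (PosSemidef.one.smul hc).add hG
  exact pow_card_le_det_of_posSemidef_sub_smul hV.isHermitian hc (by simpa using hG)

theorem det_smul_one_add_sum_vecMulVec_self_le (hc : 0 ≤ c) {B : ℝ}
    (hB : ∑ i ∈ s, z i ⬝ᵥ z i ≤ B) :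
    (c • 1 + ∑ i ∈ s, vecMulVec (z i) (z i)).det ≤
      (c + B / Fintype.card n) ^ Fintype.card n := by
  have hV := (PosSemidef.one.smul hc).add (posSemidef_sum_vecMulVec_self_s6 s z)
  refine hV.det_le_trace_div_card_pow.trans (pow_le_pow_left₀ ?_ ?_ _)
  · exact div_nonneg hV.trace_nonneg (Nat.cast_nonneg _)
  rw [trace_smul_one_add_sum_vecMulVec_self]
  rcases (Fintype.card n).eq_zero_or_pos with h0 | hpos
  · simpa [h0] using hc
  rw [add_div, mul_div_cancel_right₀ _ (by positivity)]
  gcongr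

end RegularizedGram

end Matrix

theorem sum_Icc_dotProduct_self_le {ι : Type*} [Fintype ι] {z : ℕ → ι → ℝ} {R : ℝ}
    {t T : ℕ} (hz : ∀ s ∈ Icc 1 T, euclNorm (z s) ≤ R) (ht : t ≤ T) :
    ∑ s ∈ Icc 1 t, z s ⬝ᵥ z s ≤ T * R ^ 2 := by
  have hterm : ∀ s ∈ Icc 1 t, z s ⬝ᵥ z s ≤ R ^ 2 := fun s hs ↦ by
    rw [← euclNorm_sq]
    have hs' := mem_Icc.mp hs
    exact pow_le_pow_left₀ (Real.sqrt_nonneg _) (hz s (mem_Icc.mpr ⟨hs'.1, hs'.2.trans ht⟩)) 2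
  calc ∑ s ∈ Icc 1 t, z s ⬝ᵥ z s ≤ t * R ^ 2 := by
        simpa using sum_le_card_nsmul _ _ _ hterm
    _ ≤ T * R ^ 2 := by gcongr

theorem stmt_6_general {d : ℕ} (T N : ℕ) (z : ℕ → Fin d → ℝ) (Rz lam : ℝ)
    (hlam : 0 < lam)
    (hz : ∀ t ∈ Finset.Icc 1 T, euclNorm (z t) ≤ Rz)
    (V : ℕ → Matrix (Fin d) (Fin d) ℝ)
    (hV : ∀ t, V t = lam • (1 : Matrix (Fin d) (Fin d) ℝ) +
      ∑ s ∈ Finset.Icc 1 t, Matrix.vecMulVec (z s) (z s))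
    (tk : ℕ → ℕ)
    (htk : ∀ k ∈ Finset.Icc 1 N, 1 ≤ tk k ∧ tk k ≤ T)
    (hdet : ∀ k, 1 ≤ k → k + 1 ≤ N → 2 * (V (tk k)).det ≤ (V (tk (k + 1))).det) :
    (N : ℝ) ≤ 1 + 2 * (d : ℝ) * Real.log (1 + Rz ^ 2 * (T : ℝ) / ((d : ℝ) * lam)) := by
  apply natCast_le_one_add_two_mul_log
  rcases Nat.eq_zero_or_pos N with rfl | hN
  · exact one_le_pow₀ (by simp; positivity)
  have hlow : lam ^ d ≤ (V (tk 1)).det := by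
    simpa [hV] using pow_card_le_det_smul_one_add_sum_vecMulVec_self (Icc 1 (tk 1)) z hlam.le
  have hup : (V (tk N)).det ≤ (lam + T * Rz ^ 2 / d) ^ d := by
    simpa [hV] using det_smul_one_add_sum_vecMulVec_self_le _ z hlam.le
      (sum_Icc_dotProduct_self_le hz (htk N (mem_Icc.mpr ⟨hN, le_rfl⟩)).2)
  have hchain := two_pow_mul_le_of_two_mul_le (f := fun k ↦ (V (tk k)).det) hdet hN
  refine le_of_mul_le_mul_right ?_ (by positivity : 0 < lam ^ d)
  calc 2 ^ (N - 1) * lam ^ d ≤ 2 ^ (N - 1) * (V (tk 1)).det := by gcongr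
    _ ≤ (V (tk N)).det := hchain
    _ ≤ (lam + T * Rz ^ 2 / d) ^ d := hup
    _ = (1 + Rz ^ 2 * T / (d * lam)) ^ d * lam ^ d := by
      rw [← mul_pow, add_mul, one_mul, div_mul_eq_mul_div, mul_div_mul_right _ _ hlam.ne',
        mul_comm (Rz ^ 2), add_comm lam]

/-- with `V t = λ·I + ∑_{s=1}^t z_s z_sᵀ` and `‖z_t‖ ≤ R_z` for `t ∈ {1,…,T}`, if
there are indices `1 ≤ t_1 < … < t_N ≤ T` with `det(V_{t_{k+1}}) ≥ 2·det(V_{t_k})`, then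
`N ≤ 1 + 2·d·log(1 + R_z²·T/(d·λ))`. -/
theorem stmt_6 {d : ℕ} (T N : ℕ) (z : ℕ → Fin d → ℝ) (Rz lam : ℝ) (hRz : 0 < Rz)
    (hlam : 0 < lam)
    (hz : ∀ t ∈ Finset.Icc 1 T, euclNorm (z t) ≤ Rz)
    (V : ℕ → Matrix (Fin d) (Fin d) ℝ)
    (hV : ∀ t, V t = lam • (1 : Matrix (Fin d) (Fin d) ℝ) +
      ∑ s ∈ Finset.Icc 1 t, Matrix.vecMulVec (z s) (z s))
    (tk : ℕ → ℕ)
    (htk : ∀ k ∈ Finset.Icc 1 N, 1 ≤ tk k ∧ tk k ≤ T)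
    (hmono : ∀ k, 1 ≤ k → k + 1 ≤ N → tk k < tk (k + 1))
    (hdet : ∀ k, 1 ≤ k → k + 1 ≤ N → 2 * (V (tk k)).det ≤ (V (tk (k + 1))).det) :
    (N : ℝ) ≤ 1 + 2 * (d : ℝ) * Real.log (1 + Rz ^ 2 * (T : ℝ) / ((d : ℝ) * lam)) :=
  stmt_6_general T N z Rz lam hlam hz V hV tk htk hdet
end

section
/- Let Θ = [A B] with A ∈ ℝ^{n×n}, B ∈ ℝ^{n×m}, let W be a symmetric n×n matrix with W ⪰ σ·I for σ > 0, and let 0 ≤ η̄ < σ, ν ≥ σ − η̄. Suppose that for every t in an interval of integers, Σ_t is a symmetric positive semidefinite (n+m)×(n+m) matrix, written in blocks Σ_t = [[Σ_{t,xx}, Σ_{t,xu}],[Σ_{t,ux}, Σ_{t,uu}]], satisfying: tr(Σ_t) ≤ ν; Σ_{t,xx} ⪰ Θ Σ_t Θᵀ + W − η̄·I; and ‖Σ_{t+1} − Σ_t‖ ≤ (σ−η̄)²/(2ν). Then each Σ_{t,xx} is invertible, and with K_t := Σ_{t,ux} Σ_{t,xx}⁻¹ the sequence of closed-loop matrices (A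 + B K_t) is (κ,γ)-sequentially strongly stable with κ = ν/(σ−η̄) and γ = (σ−η̄)/(2ν), and moreover ‖K_t‖ ≤ κ for all t. -/
/-!
Write `X_t = Σ_{t,xx}`, `K_t = Σ_{t,ux} X_t⁻¹`, `M_t = A + B K_t` and `s = σ - η̄`. In blocks,
`Θ Σ_t Θᵀ = M_t X_t M_tᵀ + B P_t Bᵀ` with `P_t` the Schur complement of `X_t` in `Σ_t`, which is
psd. Together with `W ⪰ σ I` the stationarity condition therefore gives `X_t ⪰ s I` and
`M_t X_t M_tᵀ ⪯ X_t - s I ⪯ (1 - s/ν) X_t`, because `X_t ⪯ tr(Σ_t) I ⪯ ν I`. So `X_t` is a Lyapunov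
certificate: with `H_t = X_t^{1/2}` and `L_t = H_t⁻¹ M_t H_t` one gets `‖L_t‖² ≤ 1 - 2γ` and
`‖H_t‖² ‖H_t⁻¹‖² = ‖X_t‖ ‖X_t⁻¹‖ ≤ ν/s = κ`. Slow variation gives `X_t ⪯ X_{t+1} + (s²/2ν) I`,
hence `‖H_{t+1}⁻¹ H_t‖² = ‖H_{t+1}⁻¹ X_t H_{t+1}⁻¹‖ ≤ 1 + γ`. Finally
`K_t X_t K_tᵀ = Σ_{t,ux} X_t⁻¹ Σ_{t,xu} ⪯ Σ_{t,uu} ⪯ ν I` bounds `‖K_t‖²` by `κ`. Since `κ ≥ 1` and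
`γ ≤ 1/2`, each squared bound implies the stated one.
-/

open scoped Matrix

/-- The spectral (ℓ²-operator) norm of a real matrix. -/
noncomputable def specNorm {m n : Type*} [Fintype m] [Fintype n] [DecidableEq n]
    (A : Matrix m n ℝ) : ℝ :=
  ‖LinearMap.toContinuousLinearMap (Matrix.toEuclideanLin A)‖

/-- A family of square matrices, indexed over a set `s` of times, is
`(κ,γ)`-sequentially strongly stable (`κ ≥ 1`, `γ ∈ (0,1)`) if there exist invertible `H t` and
`L t` with `M t = H t * L t * (H t)⁻¹`, `‖L t‖ ≤ 1 − γ`, `‖H t‖·‖(H t)⁻¹‖ ≤ κ`, and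
`‖(H (t+1))⁻¹ * H t‖ ≤ 1 + γ/2`. -/
def SeqStronglyStableOn {n : ℕ} (M : ℕ → Matrix (Fin n) (Fin n) ℝ) (s : Set ℕ)
    (κ γ : ℝ) : Prop :=
  1 ≤ κ ∧ 0 < γ ∧ γ < 1 ∧
  ∃ H L : ℕ → Matrix (Fin n) (Fin n) ℝ,
    (∀ t ∈ s, IsUnit (H t).det ∧ M t = H t * L t * (H t)⁻¹ ∧
      specNorm (L t) ≤ 1 - γ ∧ specNorm (H t) * specNorm ((H t)⁻¹) ≤ κ) ∧
    ∀ t, t ∈ s → t + 1 ∈ s → specNorm ((H (t + 1))⁻¹ * H t) ≤ 1 + γ / 2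

open scoped Matrix.Norms.L2Operator MatrixOrder
open IsometricContinuousFunctionalCalculus

lemma specNorm_eq_norm {m n : Type*} [Fintype m] [Fintype n] [DecidableEq n] (A : Matrix m n ℝ) :
    specNorm A = ‖A‖ :=
  rfl

namespace Matrix

lemma mul_mul_transpose_le_mul_mul_transpose {ι κ : Type*} [Fintype ι] [Fintype κ]
    (C : Matrix κ ι ℝ) {A B : Matrix ι ι ℝ} (h : A ≤ B) : C * A * Cᵀ ≤ C * B * Cᵀ := by
  rw [le_iff, ← Matrix.sub_mul, ← Matrix.mul_sub, ← conjTranspose_eq_transpose_of_trivial]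
  exact h.mul_mul_conjTranspose_same C

lemma posDef_of_smul_one_le {ι : Type*} [DecidableEq ι] {X : Matrix ι ι ℝ} {s : ℝ} (hs : 0 < s)
    (h : s • 1 ≤ X) : X.PosDef := by
  have hs1 : (s • (1 : Matrix ι ι ℝ)).PosDef := by
    rw [smul_one_eq_diagonal]
    exact posDef_diagonal_iff.mpr fun _ => hs
  simpa using PosDef.posSemidef_add (le_iff.mp h) hs1

section Blocks

variable {ι κ : Type*}

lemma toBlocks₁₁_mono {S T : Matrix (ι ⊕ κ) (ι ⊕ κ) ℝ} (h : S ≤ T) :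
    S.toBlocks₁₁ ≤ T.toBlocks₁₁ :=
  (le_iff.mp h).submatrix Sum.inl

lemma toBlocks₂₂_mono {S T : Matrix (ι ⊕ κ) (ι ⊕ κ) ℝ} (h : S ≤ T) :
    S.toBlocks₂₂ ≤ T.toBlocks₂₂ :=
  (le_iff.mp h).submatrix Sum.inr

@[simp]
lemma toBlocks₁₁_add (S T : Matrix (ι ⊕ κ) (ι ⊕ κ) ℝ) :
    (S + T).toBlocks₁₁ = S.toBlocks₁₁ + T.toBlocks₁₁ :=
  rfl

@[simp]
lemma toBlocks₁₁_smul_one [DecidableEq ι] [DecidableEq κ] (c : ℝ) :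
    (c • 1 : Matrix (ι ⊕ κ) (ι ⊕ κ) ℝ).toBlocks₁₁ = c • 1 := by
  ext i j
  simp [toBlocks₁₁, one_apply]

@[simp]
lemma toBlocks₂₂_smul_one [DecidableEq ι] [DecidableEq κ] (c : ℝ) :
    (c • 1 : Matrix (ι ⊕ κ) (ι ⊕ κ) ℝ).toBlocks₂₂ = c • 1 := by
  ext i j
  simp [toBlocks₂₂, one_apply]

lemma IsHermitian.toBlocks₁₂_eq_transpose {S : Matrix (ι ⊕ κ) (ι ⊕ κ) ℝ} (hS : S.IsHermitian) :
    S.toBlocks₁₂ = S.toBlocks₂₁ᵀ := by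
  rw [← fromBlocks_toBlocks S, isHermitian_fromBlocks_iff] at hS
  rw [← hS.2.2.1, conjTranspose_eq_transpose_of_trivial]

end Blocks

section BlockAlgebra

variable {R n m p : Type*} [CommRing R] [Fintype n] [DecidableEq n]

lemma mul_nonsing_inv_mul_mul_transpose {X : Matrix n n R} (hXt : Xᵀ = X) (hX : IsUnit X.det)
    (C : Matrix m n R) : C * X⁻¹ * X * (C * X⁻¹)ᵀ = C * X⁻¹ * Cᵀ := by
  rw [nonsing_inv_mul_cancel_right _ _ hX, transpose_mul, transpose_nonsing_inv, hXt,
    Matrix.mul_assoc]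

lemma fromCols_mul_fromBlocks_mul_transpose_fromCols [Fintype m] (A : Matrix p n R)
    (B : Matrix p m R) {X : Matrix n n R} (hXt : Xᵀ = X) (hX : IsUnit X.det) (C : Matrix m n R)
    (D : Matrix m m R) :
    fromCols A B * fromBlocks X Cᵀ C D * (fromCols A B)ᵀ =
      (A + B * (C * X⁻¹)) * X * (A + B * (C * X⁻¹))ᵀ + B * (D - C * X⁻¹ * Cᵀ) * Bᵀ := by
  have hKX : C * X⁻¹ * X = C := nonsing_inv_mul_cancel_right _ _ hX
  have hXK : X * (C * X⁻¹)ᵀ = Cᵀ := by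
    rw [transpose_mul, transpose_nonsing_inv, hXt, mul_nonsing_inv_cancel_left _ _ hX]
  have hKXK := mul_nonsing_inv_mul_mul_transpose hXt hX C
  set K := C * X⁻¹
  calc fromCols A B * fromBlocks X Cᵀ C D * (fromCols A B)ᵀ
      = A * X * Aᵀ + A * (X * Kᵀ) * Bᵀ + B * (K * X) * Aᵀ + B * D * Bᵀ := by
        rw [transpose_fromCols, fromCols_mul_fromBlocks, fromCols_mul_fromRows, hKX, hXK]
        simp only [Matrix.add_mul, Matrix.mul_assoc]
        abel
    _ = (A + B * K) * X * (A + B * K)ᵀ + B * (D - K * X * Kᵀ) * Bᵀ := by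
        simp only [transpose_add, transpose_mul, Matrix.add_mul, Matrix.mul_add, Matrix.mul_sub,
          Matrix.sub_mul, Matrix.mul_assoc]
        abel
    _ = _ := by rw [hKXK]

end BlockAlgebra

variable {ι κ : Type*} [Fintype ι] [DecidableEq ι] [Fintype κ]

lemma le_norm_smul_one {M : Matrix ι ι ℝ} (hM : M.IsHermitian) : M ≤ ‖M‖ • 1 := by
  rw [← Algebra.algebraMap_eq_smul_one]
  exact le_algebraMap_of_spectrum_le (fun x hx => (Real.le_norm_self x).trans
    (norm_spectrum_le M hx hM.isSelfAdjoint)) hM.isSelfAdjoint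

lemma le_add_smul_one_of_norm_sub_le {S T : Matrix ι ι ℝ} (hS : S.IsHermitian)
    (hT : T.IsHermitian) {ε : ℝ} (h : ‖S - T‖ ≤ ε) : S ≤ T + ε • 1 :=
  sub_le_iff_le_add'.mp <|
    (le_norm_smul_one (hS.sub hT)).trans (smul_le_smul_of_nonneg_right h zero_le_one)

lemma PosSemidef.norm_le_iff_le_smul_one {M : Matrix ι ι ℝ} (hM : M.PosSemidef) {r : ℝ}
    (hr : 0 ≤ r) : ‖M‖ ≤ r ↔ M ≤ r • 1 := by
  refine ⟨fun h => (le_norm_smul_one hM.isHermitian).trans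
    (smul_le_smul_of_nonneg_right h zero_le_one), fun h => ?_⟩
  · rw [← Algebra.algebraMap_eq_smul_one,
      le_algebraMap_iff_spectrum_le hM.isHermitian.isSelfAdjoint] at h
    cases isEmpty_or_nonempty ι
    · simp [Subsingleton.elim M 0, hr]
    obtain ⟨x, hx, hxM⟩ := (isGreatest_norm_spectrum (𝕜 := ℝ) M hM.isHermitian.isSelfAdjoint).1
    rw [← hxM]
    exact (Real.norm_of_nonneg (spectrum_nonneg_of_nonneg hM.nonneg hx)).trans_le (h x hx)

lemma PosSemidef.le_trace_smul_one {M : Matrix ι ι ℝ} (hM : M.PosSemidef) : M ≤ M.trace • 1 := by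
  rw [← Algebra.algebraMap_eq_smul_one]
  refine le_algebraMap_of_spectrum_le (fun x hx => ?_) hM.isHermitian.isSelfAdjoint
  rw [hM.isHermitian.spectrum_real_eq_range_eigenvalues] at hx
  obtain ⟨i, rfl⟩ := hx
  rw [hM.isHermitian.trace_eq_sum_eigenvalues]
  simpa using Finset.single_le_sum (fun j _ => hM.eigenvalues_nonneg j) (Finset.mem_univ i)

lemma PosSemidef.le_smul_one_of_trace_le {S : Matrix ι ι ℝ} (hS : S.PosSemidef) {ν : ℝ}
    (h : S.trace ≤ ν) : S ≤ ν • 1 :=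
  hS.le_trace_smul_one.trans (smul_le_smul_of_nonneg_right h zero_le_one)

lemma l2_opNorm_mul_transpose_self [DecidableEq κ] (A : Matrix κ ι ℝ) :
    ‖A * Aᵀ‖ = ‖A‖ ^ 2 := by
  simpa [sq, conjTranspose_eq_transpose_of_trivial, ← l2_opNorm_conjTranspose A] using
    l2_opNorm_conjTranspose_mul_self Aᴴ

lemma sq_norm_le_of_mul_transpose_le [DecidableEq κ] {A : Matrix κ ι ℝ} {c : ℝ} (hc : 0 ≤ c)
    (h : A * Aᵀ ≤ c • 1) : ‖A‖ ^ 2 ≤ c := by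
  have hA : (A * Aᵀ).PosSemidef := by
    simpa [conjTranspose_eq_transpose_of_trivial] using posSemidef_self_mul_conjTranspose A
  rwa [← l2_opNorm_mul_transpose_self, hA.norm_le_iff_le_smul_one hc]

lemma sq_norm_le_of_mul_mul_transpose_le [DecidableEq κ] {K : Matrix κ ι ℝ} {X : Matrix ι ι ℝ}
    {s ν : ℝ} (hs : 0 < s) (hν : 0 ≤ ν) (hX : s • 1 ≤ X) (h : K * X * Kᵀ ≤ ν • 1) :
    ‖K‖ ^ 2 ≤ ν / s := by
  refine sq_norm_le_of_mul_transpose_le (div_nonneg hν hs.le) ?_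
  have key : s • (K * Kᵀ) ≤ ν • 1 :=
    calc s • (K * Kᵀ) = K * (s • 1) * Kᵀ := by
          rw [Matrix.mul_smul, Matrix.mul_one, Matrix.smul_mul]
      _ ≤ K * X * Kᵀ := mul_mul_transpose_le_mul_mul_transpose K hX
      _ ≤ ν • 1 := h
  calc K * Kᵀ = s⁻¹ • s • (K * Kᵀ) := by rw [smul_smul, inv_mul_cancel₀ hs.ne', one_smul]
    _ ≤ s⁻¹ • ν • 1 := smul_le_smul_of_nonneg_left key (inv_nonneg.mpr hs.le)
    _ = (ν / s) • 1 := by rw [smul_smul, div_eq_inv_mul]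

lemma PosSemidef.schur_complement_toBlocks₁₁ [DecidableEq κ] {S : Matrix (ι ⊕ κ) (ι ⊕ κ) ℝ}
    (hS : S.PosSemidef) (hX : S.toBlocks₁₁.PosDef) :
    (S.toBlocks₂₂ - S.toBlocks₂₁ * S.toBlocks₁₁⁻¹ * S.toBlocks₂₁ᵀ).PosSemidef := by
  have := invertibleOfIsUnitDet _ hX.det_pos.ne'.isUnit
  have h12 := hS.isHermitian.toBlocks₁₂_eq_transpose
  have h21 : S.toBlocks₁₂ᴴ = S.toBlocks₂₁ := by
    rw [h12, conjTranspose_eq_transpose_of_trivial, transpose_transpose]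
  rw [← fromBlocks_toBlocks S, ← h21] at hS
  have key := (hX.fromBlocks₁₁ _ _).mp hS
  rwa [h21, h12] at key

lemma transpose_sqrt (X : Matrix ι ι ℝ) : (CFC.sqrt X)ᵀ = CFC.sqrt X :=
  (isHermitian_iff_isSymm.mp (nonneg_iff_posSemidef.mp (CFC.sqrt_nonneg X)).isHermitian).eq

lemma transpose_inv_sqrt (X : Matrix ι ι ℝ) : ((CFC.sqrt X)⁻¹)ᵀ = (CFC.sqrt X)⁻¹ := by
  rw [transpose_nonsing_inv, transpose_sqrt]

lemma PosSemidef.inv_sqrt_mul_inv_sqrt {X : Matrix ι ι ℝ} (hX : X.PosSemidef) :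
    (CFC.sqrt X)⁻¹ * (CFC.sqrt X)⁻¹ = X⁻¹ := by
  rw [← Matrix.mul_inv_rev, CFC.sqrt_mul_sqrt_self X hX.nonneg]

lemma PosSemidef.sq_norm_sqrt {X : Matrix ι ι ℝ} (hX : X.PosSemidef) :
    ‖CFC.sqrt X‖ ^ 2 = ‖X‖ := by
  rw [← l2_opNorm_mul_transpose_self, transpose_sqrt, CFC.sqrt_mul_sqrt_self X hX.nonneg]

lemma PosDef.isUnit_det_sqrt {X : Matrix ι ι ℝ} (hX : X.PosDef) : IsUnit (CFC.sqrt X).det := by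
  have h : (CFC.sqrt X).det * (CFC.sqrt X).det = X.det := by
    rw [← det_mul, CFC.sqrt_mul_sqrt_self X hX.posSemidef.nonneg]
  exact isUnit_of_mul_isUnit_left (h ▸ hX.det_pos.ne'.isUnit)

lemma PosDef.inv_sqrt_mul_mul_inv_sqrt {X : Matrix ι ι ℝ} (hX : X.PosDef) :
    (CFC.sqrt X)⁻¹ * X * (CFC.sqrt X)⁻¹ = 1 := by
  have hH := hX.isUnit_det_sqrt
  set H := CFC.sqrt X
  have hHH : H * H = X := CFC.sqrt_mul_sqrt_self X hX.posSemidef.nonneg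
  rw [← hHH, ← Matrix.mul_assoc, nonsing_inv_mul _ hH, Matrix.one_mul, mul_nonsing_inv _ hH]

lemma PosDef.sq_norm_inv_sqrt {X : Matrix ι ι ℝ} (hX : X.PosDef) :
    ‖(CFC.sqrt X)⁻¹‖ ^ 2 = ‖X⁻¹‖ := by
  rw [hX.posSemidef.inv_sqrt, hX.inv.posSemidef.sq_norm_sqrt]

lemma inv_le_smul_one_of_smul_one_le {X : Matrix ι ι ℝ} {s : ℝ} (hs : 0 < s) (h : s • 1 ≤ X) :
    X⁻¹ ≤ s⁻¹ • 1 := by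
  have hX := posDef_of_smul_one_le hs h
  set G := (CFC.sqrt X)⁻¹
  have key : s • X⁻¹ ≤ 1 := by
    calc s • X⁻¹ = G * (s • 1) * Gᵀ := by
          rw [transpose_inv_sqrt, Matrix.mul_smul, Matrix.mul_one, Matrix.smul_mul,
            hX.posSemidef.inv_sqrt_mul_inv_sqrt]
      _ ≤ G * X * Gᵀ := mul_mul_transpose_le_mul_mul_transpose G h
      _ = 1 := by rw [transpose_inv_sqrt, hX.inv_sqrt_mul_mul_inv_sqrt]
  calc X⁻¹ = s⁻¹ • (s • X⁻¹) := by rw [smul_smul, inv_mul_cancel₀ hs.ne', one_smul]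
    _ ≤ s⁻¹ • 1 := smul_le_smul_of_nonneg_left key (inv_nonneg.mpr hs.le)

lemma sq_norm_sqrt_mul_norm_inv_sqrt_le {X : Matrix ι ι ℝ} {s ν : ℝ} (hs : 0 < s) (hν : 0 ≤ ν)
    (hlow : s • 1 ≤ X) (hup : X ≤ ν • 1) :
    (‖CFC.sqrt X‖ * ‖(CFC.sqrt X)⁻¹‖) ^ 2 ≤ ν / s := by
  have hX := posDef_of_smul_one_le hs hlow
  rw [mul_pow, hX.posSemidef.sq_norm_sqrt, hX.sq_norm_inv_sqrt, div_eq_mul_inv]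
  exact mul_le_mul ((hX.posSemidef.norm_le_iff_le_smul_one hν).2 hup)
    ((hX.inv.posSemidef.norm_le_iff_le_smul_one (inv_nonneg.mpr hs.le)).2
      (inv_le_smul_one_of_smul_one_le hs hlow)) (norm_nonneg _) hν

lemma PosDef.sq_norm_inv_sqrt_mul_mul_sqrt_le {X M : Matrix ι ι ℝ} (hX : X.PosDef) {c : ℝ}
    (hc : 0 ≤ c) (h : M * X * Mᵀ ≤ c • X) : ‖(CFC.sqrt X)⁻¹ * M * CFC.sqrt X‖ ^ 2 ≤ c := by
  set H := CFC.sqrt X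
  have hHH : H * H = X := CFC.sqrt_mul_sqrt_self X hX.posSemidef.nonneg
  have hHt : Hᵀ = H := transpose_sqrt X
  refine sq_norm_le_of_mul_transpose_le hc ?_
  calc H⁻¹ * M * H * (H⁻¹ * M * H)ᵀ = H⁻¹ * (M * X * Mᵀ) * (H⁻¹)ᵀ := by
        rw [transpose_mul, transpose_mul, hHt, ← hHH]
        simp only [Matrix.mul_assoc]
    _ ≤ H⁻¹ * (c • X) * (H⁻¹)ᵀ := mul_mul_transpose_le_mul_mul_transpose _ h
    _ = c • 1 := by
        rw [transpose_inv_sqrt, Matrix.mul_smul, Matrix.smul_mul, hX.inv_sqrt_mul_mul_inv_sqrt]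

lemma sq_norm_inv_sqrt_mul_sqrt_le {X Y : Matrix ι ι ℝ} (hX : X.PosSemidef) {s ε : ℝ}
    (hs : 0 < s) (hε : 0 ≤ ε) (hY : s • 1 ≤ Y) (h : X ≤ Y + ε • 1) :
    ‖(CFC.sqrt Y)⁻¹ * CFC.sqrt X‖ ^ 2 ≤ 1 + ε / s := by
  have hYpd := posDef_of_smul_one_le hs hY
  set G := (CFC.sqrt Y)⁻¹
  refine sq_norm_le_of_mul_transpose_le (by positivity) ?_
  calc G * CFC.sqrt X * (G * CFC.sqrt X)ᵀ = G * X * Gᵀ := by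
        rw [transpose_mul, transpose_sqrt, Matrix.mul_assoc, ← Matrix.mul_assoc (CFC.sqrt X),
          CFC.sqrt_mul_sqrt_self X hX.nonneg, Matrix.mul_assoc]
    _ ≤ G * (Y + ε • 1) * Gᵀ := mul_mul_transpose_le_mul_mul_transpose G h
    _ = 1 + ε • Y⁻¹ := by
        rw [transpose_inv_sqrt, Matrix.mul_add, Matrix.add_mul, hYpd.inv_sqrt_mul_mul_inv_sqrt,
          Matrix.mul_smul, Matrix.mul_one, Matrix.smul_mul, hYpd.posSemidef.inv_sqrt_mul_inv_sqrt]
    _ ≤ 1 + ε • (s⁻¹ • 1) := by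
        gcongr
        exact inv_le_smul_one_of_smul_one_le hs hY
    _ = (1 + ε / s) • 1 := by rw [smul_smul, add_smul, one_smul, div_eq_mul_inv]

end Matrix

open Matrix

section Stationary

variable {n m : Type*} [Fintype n] [DecidableEq n] [Fintype m]
  (A : Matrix n n ℝ) (B : Matrix n m ℝ) {W : Matrix n n ℝ} {S : Matrix (n ⊕ m) (n ⊕ m) ℝ}
  {σ η ν : ℝ}

lemma smul_one_le_toBlocks₁₁ (hS : S.PosSemidef) (hW : σ • 1 ≤ W)
    (hstat : fromCols A B * S * (fromCols A B)ᵀ + W - η • 1 ≤ S.toBlocks₁₁) :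
    (σ - η) • 1 ≤ S.toBlocks₁₁ := by
  have hΘ : 0 ≤ fromCols A B * S * (fromCols A B)ᵀ := by
    simpa using mul_mul_transpose_le_mul_mul_transpose (fromCols A B) hS.nonneg
  calc (σ - η) • (1 : Matrix n n ℝ) = 0 + σ • 1 - η • 1 := by rw [sub_smul, zero_add]
    _ ≤ fromCols A B * S * (fromCols A B)ᵀ + W - η • 1 := by gcongr
    _ ≤ S.toBlocks₁₁ := hstat

variable [DecidableEq m]

lemma closedLoop_mul_mul_transpose_le (hS : S.PosSemidef) (htr : S.trace ≤ ν) (hν : 0 < ν)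
    (hW : σ • 1 ≤ W) (hησ : η < σ)
    (hstat : fromCols A B * S * (fromCols A B)ᵀ + W - η • 1 ≤ S.toBlocks₁₁) :
    (A + B * (S.toBlocks₂₁ * S.toBlocks₁₁⁻¹)) * S.toBlocks₁₁ *
        (A + B * (S.toBlocks₂₁ * S.toBlocks₁₁⁻¹))ᵀ ≤ (1 - (σ - η) / ν) • S.toBlocks₁₁ := by
  have hX := posDef_of_smul_one_le (sub_pos.mpr hησ) (smul_one_le_toBlocks₁₁ A B hS hW hstat)
  have hXt : S.toBlocks₁₁ᵀ = S.toBlocks₁₁ := (isHermitian_iff_isSymm.mp hX.isHermitian).eq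
  have hSblocks : S = fromBlocks S.toBlocks₁₁ S.toBlocks₂₁ᵀ S.toBlocks₂₁ S.toBlocks₂₂ := by
    rw [← hS.isHermitian.toBlocks₁₂_eq_transpose, fromBlocks_toBlocks]
  set X := S.toBlocks₁₁
  set M := A + B * (S.toBlocks₂₁ * X⁻¹)
  have hdecomp : fromCols A B * S * (fromCols A B)ᵀ = M * X * Mᵀ +
      B * (S.toBlocks₂₂ - S.toBlocks₂₁ * X⁻¹ * S.toBlocks₂₁ᵀ) * Bᵀ := by
    conv_lhs => rw [hSblocks]
    exact fromCols_mul_fromBlocks_mul_transpose_fromCols A B hXt hX.det_pos.ne'.isUnit _ _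
  have hschur : 0 ≤ B * (S.toBlocks₂₂ - S.toBlocks₂₁ * X⁻¹ * S.toBlocks₂₁ᵀ) * Bᵀ := by
    simpa using mul_mul_transpose_le_mul_mul_transpose B
      (hS.schur_complement_toBlocks₁₁ hX).nonneg
  have hXν : ((σ - η) / ν) • X ≤ (σ - η) • 1 := by
    calc ((σ - η) / ν) • X ≤ ((σ - η) / ν) • ν • (1 : Matrix n n ℝ) := by
          gcongr
          simpa using toBlocks₁₁_mono (hS.le_smul_one_of_trace_le htr)
      _ = (σ - η) • 1 := by rw [smul_smul, div_mul_cancel₀ _ hν.ne']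
  calc M * X * Mᵀ ≤ fromCols A B * S * (fromCols A B)ᵀ := by
        rw [hdecomp]; exact le_add_of_nonneg_right hschur
    _ ≤ X - (σ - η) • 1 := by
        rw [le_sub_iff_add_le, sub_smul]
        calc fromCols A B * S * (fromCols A B)ᵀ + (σ • 1 - η • 1)
            ≤ fromCols A B * S * (fromCols A B)ᵀ + W - η • 1 := by
              rw [← add_sub_assoc]; gcongr
          _ ≤ X := hstat
    _ ≤ X - ((σ - η) / ν) • X := sub_le_sub_left hXν _
    _ = (1 - (σ - η) / ν) • X := by rw [sub_smul, one_smul]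

lemma gain_mul_mul_transpose_le (hS : S.PosSemidef) (htr : S.trace ≤ ν)
    (hX : S.toBlocks₁₁.PosDef) :
    S.toBlocks₂₁ * S.toBlocks₁₁⁻¹ * S.toBlocks₁₁ * (S.toBlocks₂₁ * S.toBlocks₁₁⁻¹)ᵀ ≤ ν • 1 := by
  have hXt : S.toBlocks₁₁ᵀ = S.toBlocks₁₁ := (isHermitian_iff_isSymm.mp hX.isHermitian).eq
  rw [mul_nonsing_inv_mul_mul_transpose hXt hX.det_pos.ne'.isUnit]
  calc S.toBlocks₂₁ * S.toBlocks₁₁⁻¹ * S.toBlocks₂₁ᵀ ≤ S.toBlocks₂₂ := by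
        rw [le_iff]; exact hS.schur_complement_toBlocks₁₁ hX
    _ ≤ ν • 1 := by simpa using toBlocks₂₂_mono (hS.le_smul_one_of_trace_le htr)

end Stationary

lemma le_of_sq_le_of_one_le {x κ : ℝ} (hκ : 1 ≤ κ) (h : x ^ 2 ≤ κ) : x ≤ κ :=
  le_of_pow_le_pow_left₀ two_ne_zero (by linarith) (h.trans (le_self_pow₀ hκ two_ne_zero))

theorem seqStronglyStableOn_of_lyapunov {n : ℕ} {M X : ℕ → Matrix (Fin n) (Fin n) ℝ} {T : Set ℕ}
    {s ν : ℝ} (hs : 0 < s) (hsν : s ≤ ν) (hlow : ∀ t ∈ T, s • 1 ≤ X t)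
    (hup : ∀ t ∈ T, X t ≤ ν • 1) (hlyap : ∀ t ∈ T, M t * X t * (M t)ᵀ ≤ (1 - s / ν) • X t)
    (hdrift : ∀ t, t ∈ T → t + 1 ∈ T → X t ≤ X (t + 1) + (s ^ 2 / (2 * ν)) • 1) :
    SeqStronglyStableOn M T (ν / s) (s / (2 * ν)) := by
  have hν : 0 < ν := hs.trans_le hsν
  have hκ : 1 ≤ ν / s := (one_le_div hs).mpr hsν
  set γ := s / (2 * ν) with hγ
  have hγ0 : 0 < γ := by positivity
  have hγ1 : 2 * γ ≤ 1 := by rw [hγ, mul_div_assoc', div_le_one (by positivity)]; linarith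
  have hX t (ht : t ∈ T) : (X t).PosDef := posDef_of_smul_one_le hs (hlow t ht)
  refine ⟨hκ, hγ0, by linarith, fun t => CFC.sqrt (X t),
    fun t => (CFC.sqrt (X t))⁻¹ * M t * CFC.sqrt (X t),
    fun t ht => ⟨(hX t ht).isUnit_det_sqrt, ?_, ?_, ?_⟩, fun t ht ht' => ?_⟩
  · have hH := (hX t ht).isUnit_det_sqrt
    rw [← Matrix.mul_assoc, ← Matrix.mul_assoc, mul_nonsing_inv _ hH, Matrix.one_mul,
      mul_nonsing_inv_cancel_right _ _ hH]
  · rw [specNorm_eq_norm]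
    refine le_of_pow_le_pow_left₀ two_ne_zero (by linarith) ?_
    calc _ ≤ 1 - s / ν := (hX t ht).sq_norm_inv_sqrt_mul_mul_sqrt_le
          (by rw [sub_nonneg, div_le_one hν]; exact hsν) (hlyap t ht)
      _ = 1 - 2 * γ := by rw [hγ]; field_simp
      _ ≤ (1 - γ) ^ 2 := by nlinarith
  · rw [specNorm_eq_norm, specNorm_eq_norm]
    exact le_of_sq_le_of_one_le hκ
      (sq_norm_sqrt_mul_norm_inv_sqrt_le hs hν.le (hlow t ht) (hup t ht))
  · rw [specNorm_eq_norm]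
    refine le_of_pow_le_pow_left₀ two_ne_zero (by linarith) ?_
    calc _ ≤ 1 + s ^ 2 / (2 * ν) / s := sq_norm_inv_sqrt_mul_sqrt_le (hX t ht).posSemidef hs
          (by positivity) (hlow (t + 1) ht') (hdrift t ht ht')
      _ = 1 + γ := by rw [hγ]; field_simp
      _ ≤ (1 + γ / 2) ^ 2 := by nlinarith

theorem stmt_7_general {n m : ℕ} (A : Matrix (Fin n) (Fin n) ℝ) (B : Matrix (Fin n) (Fin m) ℝ)
    (W : Matrix (Fin n) (Fin n) ℝ) (σ : ℝ)
    (hW : (W - σ • (1 : Matrix (Fin n) (Fin n) ℝ)).PosSemidef)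
    (ηbar ν : ℝ) (hηbarσ : ηbar < σ) (hν : σ - ηbar ≤ ν)
    (a b : ℕ) (Sig : ℕ → Matrix (Fin n ⊕ Fin m) (Fin n ⊕ Fin m) ℝ)
    (hpsd : ∀ t ∈ Set.Icc a b, (Sig t).PosSemidef)
    (htr : ∀ t ∈ Set.Icc a b, (Sig t).trace ≤ ν)
    (hstat : ∀ t ∈ Set.Icc a b,
      ((Sig t).toBlocks₁₁ -
        (Matrix.fromCols A B * Sig t * (Matrix.fromCols A B)ᵀ + W -
          ηbar • (1 : Matrix (Fin n) (Fin n) ℝ))).PosSemidef)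
    (hvar : ∀ t, t ∈ Set.Icc a b → t + 1 ∈ Set.Icc a b →
      specNorm (Sig (t + 1) - Sig t) ≤ (σ - ηbar) ^ 2 / (2 * ν)) :
    (∀ t ∈ Set.Icc a b, IsUnit ((Sig t).toBlocks₁₁).det) ∧
    SeqStronglyStableOn (fun t => A + B * ((Sig t).toBlocks₂₁ * ((Sig t).toBlocks₁₁)⁻¹))
      (Set.Icc a b) (ν / (σ - ηbar)) ((σ - ηbar) / (2 * ν)) ∧
    ∀ t ∈ Set.Icc a b, specNorm ((Sig t).toBlocks₂₁ * ((Sig t).toBlocks₁₁)⁻¹) ≤ ν / (σ - ηbar) := by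
  have hs : 0 < σ - ηbar := sub_pos.mpr hηbarσ
  have hν0 : 0 < ν := hs.trans_le hν
  have hlow : ∀ t ∈ Set.Icc a b, (σ - ηbar) • 1 ≤ (Sig t).toBlocks₁₁ := fun t ht =>
    smul_one_le_toBlocks₁₁ A B (hpsd t ht) hW (hstat t ht)
  have hX : ∀ t ∈ Set.Icc a b, (Sig t).toBlocks₁₁.PosDef := fun t ht =>
    posDef_of_smul_one_le hs (hlow t ht)
  refine ⟨fun t ht => (hX t ht).det_pos.ne'.isUnit, seqStronglyStableOn_of_lyapunov hs hν hlow
    (fun t ht => by simpa using toBlocks₁₁_mono ((hpsd t ht).le_smul_one_of_trace_le (htr t ht)))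
    (fun t ht => closedLoop_mul_mul_transpose_le A B (hpsd t ht) (htr t ht) hν0 hW hηbarσ
      (hstat t ht)) (fun t ht ht' => ?_), fun t ht => ?_⟩
  · have hdiff := le_add_smul_one_of_norm_sub_le (hpsd t ht).isHermitian
      (hpsd (t + 1) ht').isHermitian ((norm_sub_rev _ _).trans_le (hvar t ht ht'))
    simpa using toBlocks₁₁_mono hdiff
  · rw [specNorm_eq_norm]
    exact le_of_sq_le_of_one_le ((one_le_div hs).mpr hν) (sq_norm_le_of_mul_mul_transpose_le hs
      hν0.le (hlow t ht) (gain_mul_mul_transpose_le (hpsd t ht) (htr t ht) (hX t ht)))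

/-- if, on an interval of times, the psd matrices `Σ_t` (with blocks indexed by
`Fin n ⊕ Fin m`) have trace at most `ν`, satisfy the relaxed stationarity condition
`Σ_{t,xx} ⪰ Θ Σ_t Θᵀ + W − η̄·I` (where `Θ = [A B]`, `W ⪰ σ·I`, `0 ≤ η̄ < σ ≤ η̄ + ν`) and vary
slowly, `‖Σ_{t+1} − Σ_t‖ ≤ (σ−η̄)²/(2ν)`, then each `Σ_{t,xx}` is invertible and, with
`K_t = Σ_{t,ux} Σ_{t,xx}⁻¹`, the closed-loop matrices `A + B K_t` are `(κ,γ)`-sequentially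
strongly stable with `κ = ν/(σ−η̄)`, `γ = (σ−η̄)/(2ν)`, and `‖K_t‖ ≤ κ`. -/
theorem stmt_7 {n m : ℕ} (A : Matrix (Fin n) (Fin n) ℝ) (B : Matrix (Fin n) (Fin m) ℝ)
    (W : Matrix (Fin n) (Fin n) ℝ) (hWsymm : W.IsSymm) (σ : ℝ) (hσ : 0 < σ)
    (hW : (W - σ • (1 : Matrix (Fin n) (Fin n) ℝ)).PosSemidef)
    (ηbar ν : ℝ) (hηbar0 : 0 ≤ ηbar) (hηbarσ : ηbar < σ) (hν : σ - ηbar ≤ ν)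
    (a b : ℕ) (Sig : ℕ → Matrix (Fin n ⊕ Fin m) (Fin n ⊕ Fin m) ℝ)
    (hpsd : ∀ t ∈ Set.Icc a b, (Sig t).PosSemidef)
    (htr : ∀ t ∈ Set.Icc a b, (Sig t).trace ≤ ν)
    (hstat : ∀ t ∈ Set.Icc a b,
      ((Sig t).toBlocks₁₁ -
        (Matrix.fromCols A B * Sig t * (Matrix.fromCols A B)ᵀ + W -
          ηbar • (1 : Matrix (Fin n) (Fin n) ℝ))).PosSemidef)
    (hvar : ∀ t, t ∈ Set.Icc a b → t + 1 ∈ Set.Icc a b →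
      specNorm (Sig (t + 1) - Sig t) ≤ (σ - ηbar) ^ 2 / (2 * ν)) :
    (∀ t ∈ Set.Icc a b, IsUnit ((Sig t).toBlocks₁₁).det) ∧
    SeqStronglyStableOn (fun t => A + B * ((Sig t).toBlocks₂₁ * ((Sig t).toBlocks₁₁)⁻¹))
      (Set.Icc a b) (ν / (σ - ηbar)) ((σ - ηbar) / (2 * ν)) ∧
    ∀ t ∈ Set.Icc a b, specNorm ((Sig t).toBlocks₂₁ * ((Sig t).toBlocks₁₁)⁻¹) ≤ ν / (σ - ηbar) :=
  stmt_7_general A B W σ hW ηbar ν hηbarσ hν a b Sig hpsd htr hstat hvar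
end

section
/- Let ᾱ_1,…,ᾱ_J be symmetric positive semidefinite d×d matrices, let V be a symmetric positive definite d×d matrix, let μ > 0, ε₁ > 0, ξ ∈ ℝ, and define the pessimistic set E^p = {Σ symmetric d×d, Σ ⪰ 0 : ⟨ᾱ_j, Σ⟩ + μ·⟨V⁻¹, Σ⟩ ≤ ξ for all j ∈ {1,…,J}}. Let Σ^o ⪰ 0 satisfy ⟨ᾱ_j, Σ^o⟩ ≤ ξ for all j, and let Σ^safe ⪰ 0 satisfy ⟨ᾱ_j, Σ^safe⟩ + μ·⟨V⁻¹, Σ^safe⟩ ≤ ξ − ε₁ for all j. Define φ* = max{φ ∈ [0,1] : φ·Σ^o + (1−φ)·Σ^safe ∈ E^p} and Σ̄ = φ*·Σ^o + (1−φ*)·Σ^safe. Then the maximum φ* exists and 1 − φ* ≤ μ·⟨V⁻¹, Σ̄⟩ / ε₁. -/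
/-!
Along the segment `φ ↦ φ • Σ^o + (1 - φ) • Σ^safe` every constraint of `E^p` is affine in `φ`,
and positive semidefiniteness is automatic for `φ ∈ [0, 1]`. So the feasible parameters form a
closed subset of `[0, 1]`, which has a maximum once it is nonempty. With `m = μ⟨V⁻¹, Σ^o⟩ ≥ 0`,
the constraints are `≤ ξ + m` at `φ = 1` and `≤ ξ - ε₁` at `φ = 0`, so interpolation makes
`φ₀ = ε₁ / (ε₁ + m)` feasible. Hence `φ* ≥ φ₀`, i.e. `(1 - φ*) ε₁ ≤ φ* m ≤ μ⟨V⁻¹, Σ̄⟩`.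
-/

open scoped Matrix

/-- The trace inner product `⟨X, Y⟩ = tr(Xᵀ Y)` of two real matrices. -/
noncomputable def matInner {d : ℕ} (X Y : Matrix (Fin d) (Fin d) ℝ) : ℝ :=
  (Xᵀ * Y).trace

open scoped MatrixOrder in
lemma matInner_nonneg {d : ℕ} {A S : Matrix (Fin d) (Fin d) ℝ} (hA : A.PosSemidef)
    (hS : S.PosSemidef) : 0 ≤ matInner A S := by
  obtain ⟨X, hX, -, rfl⟩ := CFC.exists_sqrt_of_isSelfAdjoint_of_quasispectrumRestricts
    hA.isHermitian (QuasispectrumRestricts.nnreal_of_nonneg hA.nonneg)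
  have hXt : Xᵀ = Xᴴ := by simp
  have hXX : Xᴴ = X := hX.star_eq
  calc (0 : ℝ) ≤ (X * S * Xᴴ).trace := (hS.mul_mul_conjTranspose_same X).trace_nonneg
    _ = matInner (X * X) S := by
      rw [matInner, Matrix.transpose_mul, hXt, hXX, Matrix.trace_mul_cycle, Matrix.mul_assoc]

lemma matInner_smul_add_smul {d : ℕ} (X A B : Matrix (Fin d) (Fin d) ℝ) (a b : ℝ) :
    matInner X (a • A + b • B) = a * matInner X A + b * matInner X B := by
  simp only [matInner, Matrix.mul_add, Matrix.mul_smul, Matrix.trace_add, Matrix.trace_smul,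
    smul_eq_mul]

lemma Matrix.PosSemidef.smul_add_one_sub_smul {n : Type*} [Fintype n]
    {A B : Matrix n n ℝ} (hA : A.PosSemidef) (hB : B.PosSemidef) {φ : ℝ} (hφ : φ ∈ Set.Icc 0 1) :
    (φ • A + (1 - φ) • B).PosSemidef :=
  (hA.smul hφ.1).add (hB.smul (sub_nonneg.mpr hφ.2))

/-- The pessimistic set `E^p`, with `W` in the role of `V⁻¹`. -/
def pessimisticSet {ι : Type*} {d : ℕ} (α : ι → Matrix (Fin d) (Fin d) ℝ)
    (W : Matrix (Fin d) (Fin d) ℝ) (μ ξ : ℝ) : Set (Matrix (Fin d) (Fin d) ℝ) :=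
  {S | S.IsSymm ∧ S.PosSemidef ∧ ∀ j, matInner (α j) S + μ * matInner W S ≤ ξ}

lemma smul_add_one_sub_smul_mem_pessimisticSet_iff {ι : Type*} {d : ℕ}
    (α : ι → Matrix (Fin d) (Fin d) ℝ) (W : Matrix (Fin d) (Fin d) ℝ) (μ ξ : ℝ)
    {A B : Matrix (Fin d) (Fin d) ℝ} (hA : A.PosSemidef) (hB : B.PosSemidef)
    {φ : ℝ} (hφ : φ ∈ Set.Icc 0 1) :
    φ • A + (1 - φ) • B ∈ pessimisticSet α W μ ξ ↔
      ∀ j, φ * (matInner (α j) A + μ * matInner W A)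
        + (1 - φ) * (matInner (α j) B + μ * matInner W B) ≤ ξ := by
  have hpsd := hA.smul_add_one_sub_smul hB hφ
  have hcomb : ∀ j, matInner (α j) (φ • A + (1 - φ) • B) + μ * matInner W (φ • A + (1 - φ) • B)
      = φ * (matInner (α j) A + μ * matInner W A)
        + (1 - φ) * (matInner (α j) B + μ * matInner W B) := fun j => by
    rw [matInner_smul_add_smul, matInner_smul_add_smul]
    ring
  simp only [pessimisticSet, Set.mem_ofPred_eq, hcomb,
    Matrix.isHermitian_iff_isSymm.mp hpsd.isHermitian, hpsd, true_and]

section Interpolation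

variable {ι : Type*} {A B : ι → ℝ} {ξ m ε φ : ℝ}

lemma div_add_mem_Icc (hm : 0 ≤ m) (hε : 0 < ε) : ε / (ε + m) ∈ Set.Icc 0 1 :=
  ⟨by positivity, (div_le_one (by linarith)).mpr (by linarith)⟩

lemma div_add_mul_add_one_sub_mul_le (hm : 0 ≤ m) (hε : 0 < ε) {a b : ℝ}
    (ha : a ≤ ξ + m) (hb : b ≤ ξ - ε) :
    ε / (ε + m) * a + (1 - ε / (ε + m)) * b ≤ ξ := by
  obtain ⟨h0, h1⟩ := div_add_mem_Icc hm hε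
  have hcancel : ε / (ε + m) * (ε + m) = ε := div_mul_cancel₀ _ (by linarith)
  nlinarith [mul_le_mul_of_nonneg_left ha h0, mul_le_mul_of_nonneg_left hb (sub_nonneg.mpr h1)]

lemma exists_isGreatest_and_div_add_le (hm : 0 ≤ m) (hε : 0 < ε)
    (hA : ∀ j, A j ≤ ξ + m) (hB : ∀ j, B j ≤ ξ - ε) :
    ∃ φ, IsGreatest {φ : ℝ | φ ∈ Set.Icc 0 1 ∧ ∀ j, φ * A j + (1 - φ) * B j ≤ ξ} φ ∧
      ε / (ε + m) ≤ φ := by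
  set T := {φ : ℝ | φ ∈ Set.Icc 0 1 ∧ ∀ j, φ * A j + (1 - φ) * B j ≤ ξ}
  have hclosed : IsClosed T := by
    simp only [T, Set.ofPred_and, Set.ofPred_forall]
    exact isClosed_Icc.inter <| isClosed_iInter fun j => isClosed_le (by fun_prop) (by fun_prop)
  have hcompact : IsCompact T := isCompact_Icc.of_isClosed_subset hclosed fun _ h => h.1
  have hφ₀ : ε / (ε + m) ∈ T :=
    ⟨div_add_mem_Icc hm hε, fun j => div_add_mul_add_one_sub_mul_le hm hε (hA j) (hB j)⟩
  obtain ⟨φ, hφ⟩ := hcompact.exists_isGreatest ⟨_, hφ₀⟩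
  exact ⟨φ, hφ, hφ.2 hφ₀⟩

lemma one_sub_le_mul_div_of_div_add_le (hm : 0 ≤ m) (hε : 0 < ε) (hφ : ε / (ε + m) ≤ φ) :
    1 - φ ≤ φ * m / ε := by
  rw [div_le_iff₀ (by linarith)] at hφ
  rw [le_div_iff₀ hε]
  linarith

end Interpolation

theorem stmt_11_general {d J : ℕ} (alphaBar : Fin J → Matrix (Fin d) (Fin d) ℝ)
    (V : Matrix (Fin d) (Fin d) ℝ) (hVpd : V.PosDef)
    (μ ε₁ ξ : ℝ) (hμ : 0 < μ) (hε₁ : 0 < ε₁)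
    (Ep : Set (Matrix (Fin d) (Fin d) ℝ))
    (hEp : Ep = {S | S.IsSymm ∧ S.PosSemidef ∧
      ∀ j, matInner (alphaBar j) S + μ * matInner V⁻¹ S ≤ ξ})
    (So Ssafe : Matrix (Fin d) (Fin d) ℝ) (hSo : So.PosSemidef) (hSsafe : Ssafe.PosSemidef)
    (hSoC : ∀ j, matInner (alphaBar j) So ≤ ξ)
    (hSsafeC : ∀ j, matInner (alphaBar j) Ssafe + μ * matInner V⁻¹ Ssafe ≤ ξ - ε₁) :
    ∃ φstar : ℝ,
      IsGreatest {φ : ℝ | φ ∈ Set.Icc (0 : ℝ) 1 ∧ φ • So + (1 - φ) • Ssafe ∈ Ep} φstar ∧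
      1 - φstar ≤ μ * matInner V⁻¹ (φstar • So + (1 - φstar) • Ssafe) / ε₁ := by
  change Ep = pessimisticSet alphaBar V⁻¹ μ ξ at hEp
  subst hEp
  have hVinv : V⁻¹.PosSemidef := hVpd.inv.posSemidef
  have hvO : 0 ≤ μ * matInner V⁻¹ So := mul_nonneg hμ.le (matInner_nonneg hVinv hSo)
  have hvS : 0 ≤ μ * matInner V⁻¹ Ssafe := mul_nonneg hμ.le (matInner_nonneg hVinv hSsafe)
  obtain ⟨φ, hgreatest, hφ₀⟩ := exists_isGreatest_and_div_add_le hvO hε₁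
    (fun j => add_le_add_left (hSoC j) _) hSsafeC
  have hfeasible : {φ : ℝ | φ ∈ Set.Icc (0 : ℝ) 1 ∧
      φ • So + (1 - φ) • Ssafe ∈ pessimisticSet alphaBar V⁻¹ μ ξ} =
      {φ : ℝ | φ ∈ Set.Icc 0 1 ∧ ∀ j, φ * (matInner (alphaBar j) So + μ * matInner V⁻¹ So)
        + (1 - φ) * (matInner (alphaBar j) Ssafe + μ * matInner V⁻¹ Ssafe) ≤ ξ} :=
    Set.ext fun φ => and_congr_right
      (smul_add_one_sub_smul_mem_pessimisticSet_iff _ _ μ ξ hSo hSsafe)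
  refine ⟨φ, hfeasible ▸ hgreatest, ?_⟩
  have hφ1 : 0 ≤ 1 - φ := sub_nonneg.mpr hgreatest.1.1.2
  calc 1 - φ ≤ φ * (μ * matInner V⁻¹ So) / ε₁ := one_sub_le_mul_div_of_div_add_le hvO hε₁ hφ₀
    _ ≤ μ * matInner V⁻¹ (φ • So + (1 - φ) • Ssafe) / ε₁ := by
      rw [matInner_smul_add_smul]
      refine div_le_div_of_nonneg_right ?_ hε₁.le
      linarith [mul_nonneg hφ1 hvS]

/-- with the pessimistic set
`E^p = {Σ ⪰ 0 : ⟨ᾱ_j, Σ⟩ + μ·⟨V⁻¹, Σ⟩ ≤ ξ ∀j}`, if `Σ^o ⪰ 0` satisfies `⟨ᾱ_j, Σ^o⟩ ≤ ξ` and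
`Σ^safe ⪰ 0` satisfies `⟨ᾱ_j, Σ^safe⟩ + μ·⟨V⁻¹, Σ^safe⟩ ≤ ξ − ε₁`, then
`φ* = max{φ ∈ [0,1] : φ·Σ^o + (1−φ)·Σ^safe ∈ E^p}` exists and, with
`Σ̄ = φ*·Σ^o + (1−φ*)·Σ^safe`, it holds that `1 − φ* ≤ μ·⟨V⁻¹, Σ̄⟩/ε₁`. -/
theorem stmt_11 {d J : ℕ} (alphaBar : Fin J → Matrix (Fin d) (Fin d) ℝ)
    (halphaSymm : ∀ j, (alphaBar j).IsSymm) (halphaPsd : ∀ j, (alphaBar j).PosSemidef)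
    (V : Matrix (Fin d) (Fin d) ℝ) (hVsymm : V.IsSymm) (hVpd : V.PosDef)
    (μ ε₁ ξ : ℝ) (hμ : 0 < μ) (hε₁ : 0 < ε₁)
    (Ep : Set (Matrix (Fin d) (Fin d) ℝ))
    (hEp : Ep = {S | S.IsSymm ∧ S.PosSemidef ∧
      ∀ j, matInner (alphaBar j) S + μ * matInner V⁻¹ S ≤ ξ})
    (So Ssafe : Matrix (Fin d) (Fin d) ℝ) (hSo : So.PosSemidef) (hSsafe : Ssafe.PosSemidef)
    (hSoC : ∀ j, matInner (alphaBar j) So ≤ ξ)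
    (hSsafeC : ∀ j, matInner (alphaBar j) Ssafe + μ * matInner V⁻¹ Ssafe ≤ ξ - ε₁) :
    ∃ φstar : ℝ,
      IsGreatest {φ : ℝ | φ ∈ Set.Icc (0 : ℝ) 1 ∧ φ • So + (1 - φ) • Ssafe ∈ Ep} φstar ∧
      1 - φstar ≤ μ * matInner V⁻¹ (φstar • So + (1 - φstar) • Ssafe) / ε₁ :=
  stmt_11_general alphaBar V hVpd μ ε₁ ξ hμ hε₁ Ep hEp So Ssafe hSo hSsafe hSoC hSsafeC
end
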